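/- arXiv:2110.00923 — 2 statements merged into one kernel-verified Lean document; each statement's English description precedes it below -/
import Mathlib

section
/- Let λ₁, …, λ_r > 0, and let s₀, …, s_r: [0,∞) → ℝ be functions with s_k(t) = s_{k-1}'(t) + λ_k s_{k-1}(t) for k = 1,…,r (each s_{k-1} differentiable). If s_{r-1}(t) ≥ 0 for all t ≥ 0 and s_k(0) ≥ 0 for all k = 0,…,r−2, then s₀(t) ≥ 0 for all t ≥ 0. -/
/-!
Multiplying by the integrating factor `exp (λ t)` turns `s' + λ s ≥ 0` into monotonicity of
`exp (λ t) * s t`, so a function satisfying this differential inequality stays nonnegative once it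
starts nonnegative. Applying this to `s_k` with `s_{k+1} = s_k' + λ_{k+1} s_k ≥ 0` propagates
nonnegativity down the chain from `s_{r-1}` to `s₀`.
-/

open Real Set

theorem monotoneOn_exp_mul_of_deriv_add_mul_nonneg {lam a : ℝ} {s : ℝ → ℝ}
    (hs : Differentiable ℝ s) (h : ∀ t ≥ a, 0 ≤ deriv s t + lam * s t) :
    MonotoneOn (fun t => exp (lam * t) * s t) (Ici a) := by
  have hderiv : ∀ t, HasDerivAt (fun t => exp (lam * t) * s t)
      (exp (lam * t) * (deriv s t + lam * s t)) t := by
    intro t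
    have hexp : HasDerivAt (fun t => exp (lam * t)) (exp (lam * t) * lam) t := by
      simpa using ((hasDerivAt_id t).const_mul lam).exp
    exact (hexp.mul (hs t).hasDerivAt).congr_deriv (by ring)
  have hdiff : Differentiable ℝ (fun t => exp (lam * t) * s t) :=
    fun t => (hderiv t).differentiableAt
  refine monotoneOn_of_deriv_nonneg (convex_Ici a) hdiff.continuous.continuousOn
    hdiff.differentiableOn fun t ht => ?_
  rw [interior_Ici] at ht
  rw [(hderiv t).deriv]
  exact mul_nonneg (exp_pos _).le (h t (le_of_lt ht))

theorem nonneg_of_deriv_add_mul_nonneg {lam a : ℝ} {s : ℝ → ℝ}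
    (hs : Differentiable ℝ s) (h : ∀ t ≥ a, 0 ≤ deriv s t + lam * s t) (ha : 0 ≤ s a) :
    ∀ t ≥ a, 0 ≤ s t := by
  intro t ht
  have hmono := monotoneOn_exp_mul_of_deriv_add_mul_nonneg hs h self_mem_Ici ht ht
  exact nonneg_of_mul_nonneg_right ((mul_nonneg (exp_pos _).le ha).trans hmono) (exp_pos _)

theorem nonneg_of_cascade {n : ℕ} {a : ℝ} (lam : ℕ → ℝ) (s : ℕ → ℝ → ℝ)
    (hdiff : ∀ k < n, Differentiable ℝ (s k))
    (hsucc : ∀ k < n, ∀ t ≥ a, s (k + 1) t = deriv (s k) t + lam (k + 1) * s k t)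
    (htop : ∀ t ≥ a, 0 ≤ s n t) (hinit : ∀ k < n, 0 ≤ s k a) :
    ∀ k ≤ n, ∀ t ≥ a, 0 ≤ s k t := by
  refine fun k => Nat.decreasingInduction (motive := fun k _ => ∀ t ≥ a, 0 ≤ s k t)
    (fun k hk ih => ?_) htop
  refine nonneg_of_deriv_add_mul_nonneg (lam := lam (k + 1)) (hdiff k hk) (fun t ht => ?_)
    (hinit k hk)
  exact hsucc k hk t ht ▸ ih t ht

theorem stmt_13_general (r : ℕ) (lam : ℕ → ℝ)
    (s : ℕ → ℝ → ℝ)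
    (hdiff : ∀ k, k ≤ r - 1 → Differentiable ℝ (s k))
    (hdef : ∀ k, 1 ≤ k → k ≤ r → ∀ t, s k t = deriv (s (k - 1)) t + lam k * s (k - 1) t)
    (hsr : ∀ t ≥ (0:ℝ), s (r - 1) t ≥ 0)
    (hinit : ∀ k, k ≤ r - 2 → s k 0 ≥ 0) :
    ∀ t ≥ (0:ℝ), s 0 t ≥ 0 :=
  nonneg_of_cascade lam s (fun k hk => hdiff k hk.le)
    (fun k hk t _ => hdef (k + 1) (by omega) (by omega) t) hsr
    (fun k hk => hinit k (by omega)) 0 (Nat.zero_le _)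

theorem stmt_13 (r : ℕ) (hr : 2 ≤ r) (lam : ℕ → ℝ)
    (hlam : ∀ k, 1 ≤ k → k ≤ r → 0 < lam k)
    (s : ℕ → ℝ → ℝ)
    (hdiff : ∀ k, k ≤ r - 1 → Differentiable ℝ (s k))
    (hdef : ∀ k, 1 ≤ k → k ≤ r → ∀ t, s k t = deriv (s (k - 1)) t + lam k * s (k - 1) t)
    (hsr : ∀ t ≥ (0:ℝ), s (r - 1) t ≥ 0)
    (hinit : ∀ k, k ≤ r - 2 → s k 0 ≥ 0) :
    ∀ t ≥ (0:ℝ), s 0 t ≥ 0 :=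
  stmt_13_general r lam s hdiff hdef hsr hinit
end

section
/- Let h be Lipschitz with constant L, M: [0,∞) → [0,∞), and suppose ε satisfies 0 < ε ≤ h₀(x̂(0),0)/(N + Σᵢ(2‖θ̂ᵢ(0)‖/θ̄ᵢ + ‖θ̂ᵢ(0)‖²/θ̄ᵢ²)) where h₀(x̂,t) = h(x̂) − L M(t) and h₀(x̂(0),0) > 0. Then the composite function h̄(0) = h₀(x̂(0),0) − Σᵢ (ε/θ̄ᵢ²)‖θᵢ − θ̂ᵢ(0)‖² is nonnegative for every choice of θᵢ with ‖θᵢ‖ ≤ θ̄ᵢ, and consequently if h̄'(t) ≥ −μ h̄(t) for all t ≥ 0 then h(x(t)) ≥ 0 for all t ≥ 0 whenever ‖x̂(t) − x(t)‖ ≤ M(t). -/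
/-!
At `t = 0` each penalty term is controlled by `‖θᵢ - θ̂ᵢ(0)‖ ≤ θ̄ᵢ + ‖θ̂ᵢ(0)‖`, which turns
`(ε / θ̄ᵢ²) ‖θᵢ - θ̂ᵢ(0)‖²` into `ε (1 + 2‖θ̂ᵢ(0)‖/θ̄ᵢ + ‖θ̂ᵢ(0)‖²/θ̄ᵢ²)`; summing, the choice of `ε`
makes the total penalty at most `h₀(x̂(0), 0)`, so `h̄(0) ≥ 0`. The differential inequality
`h̄' ≥ -μ h̄` makes `e^{μt} h̄(t)` nondecreasing, so `h̄` stays nonnegative. Dropping the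
nonnegative penalties gives `h(x̂(t)) ≥ L M(t)`, and the Lipschitz bound together with
`‖x̂(t) - x(t)‖ ≤ M(t)` transfers this to `h(x(t)) ≥ 0`.
-/

open Finset

lemma mul_le_of_pos_of_le_div {ε a b : ℝ} (hε : 0 < ε) (hεab : ε ≤ a / b) (hb : 0 ≤ b) :
    ε * b ≤ a := by
  rcases hb.eq_or_lt with rfl | hb
  -- `a / 0 = 0`, so `b = 0` contradicts `0 < ε`.
  · rw [div_zero] at hεab
    linarith
  · exact (le_div_iff₀ hb).mp hεab

lemma div_sq_mul_norm_sub_sq_le {E : Type*} [SeminormedAddCommGroup E] {u v : E} {b ε : ℝ}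
    (hb : 0 < b) (hu : ‖u‖ ≤ b) (hε : 0 ≤ ε) :
    ε / b ^ 2 * ‖u - v‖ ^ 2 ≤ ε * (1 + (2 * ‖v‖ / b + ‖v‖ ^ 2 / b ^ 2)) := by
  have hdist : ‖u - v‖ ≤ b + ‖v‖ := (norm_sub_le u v).trans (by linarith)
  calc ε / b ^ 2 * ‖u - v‖ ^ 2 ≤ ε / b ^ 2 * (b + ‖v‖) ^ 2 := by gcongr
    _ = ε * (1 + (2 * ‖v‖ / b + ‖v‖ ^ 2 / b ^ 2)) := by field_simp; ring

lemma sum_div_sq_mul_norm_sub_sq_le {ι E : Type*} [Fintype ι] [SeminormedAddCommGroup E]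
    {u v : ι → E} {b : ι → ℝ} {ε : ℝ} (hb : ∀ i, 0 < b i) (hu : ∀ i, ‖u i‖ ≤ b i)
    (hε : 0 ≤ ε) :
    ∑ i, ε / b i ^ 2 * ‖u i - v i‖ ^ 2 ≤
      ε * (Fintype.card ι + ∑ i, (2 * ‖v i‖ / b i + ‖v i‖ ^ 2 / b i ^ 2)) := by
  calc ∑ i, ε / b i ^ 2 * ‖u i - v i‖ ^ 2
      ≤ ∑ i, ε * (1 + (2 * ‖v i‖ / b i + ‖v i‖ ^ 2 / b i ^ 2)) :=
        sum_le_sum fun i _ ↦ div_sq_mul_norm_sub_sq_le (hb i) (hu i) hε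
    _ = ε * (Fintype.card ι + ∑ i, (2 * ‖v i‖ / b i + ‖v i‖ ^ 2 / b i ^ 2)) := by
        rw [← mul_sum, sum_add_distrib, sum_const, card_univ, nsmul_one]

lemma nonneg_of_deriv_ge_neg_mul_self {f : ℝ → ℝ} {μ : ℝ} (hf : Differentiable ℝ f)
    (hf0 : 0 ≤ f 0) (hderiv : ∀ t ≥ (0 : ℝ), -μ * f t ≤ deriv f t) {t : ℝ} (ht : 0 ≤ t) :
    0 ≤ f t := by
  set g : ℝ → ℝ := fun u ↦ Real.exp (μ * u) * f u
  have hg : ∀ u, HasDerivAt g (Real.exp (μ * u) * (deriv f u + μ * f u)) u := by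
    intro u
    exact ((((hasDerivAt_id' u).const_mul μ).exp).mul (hf u).hasDerivAt).congr_deriv (by ring)
  have hmono : MonotoneOn g (Set.Ici 0) := by
    refine monotoneOn_of_hasDerivWithinAt_nonneg (convex_Ici 0)
      (fun u _ ↦ (hg u).continuousAt.continuousWithinAt) (fun u _ ↦ (hg u).hasDerivWithinAt)
      fun u hu ↦ ?_
    rw [interior_Ici] at hu
    have := hderiv u (le_of_lt hu)
    have := Real.exp_pos (μ * u)
    nlinarith
  have hg0t : g 0 ≤ g t := hmono Set.self_mem_Ici ht ht
  have hgt : 0 ≤ g t := le_trans (by simpa [g] using hf0) hg0t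
  exact nonneg_of_mul_nonneg_right hgt (Real.exp_pos (μ * t))

theorem stmt_14_general {n N : ℕ}
    (h : EuclideanSpace ℝ (Fin n) → ℝ) (L : ℝ) (hL : 0 < L)
    (hLip : ∀ x y : EuclideanSpace ℝ (Fin n), |h x - h y| ≤ L * ‖x - y‖)
    (M : ℝ → ℝ)
    (θbar : Fin N → ℝ) (hθbar : ∀ i, 0 < θbar i)
    (θ : Fin N → EuclideanSpace ℝ (Fin n)) (hθ : ∀ i, ‖θ i‖ ≤ θbar i)
    (θhat : Fin N → ℝ → EuclideanSpace ℝ (Fin n))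
    (x xhat : ℝ → EuclideanSpace ℝ (Fin n))
    (μ ε : ℝ)
    (hε : 0 < ε ∧ ε ≤ (h (xhat 0) - L * M 0) /
      ((N : ℝ) + ∑ i, (2 * ‖θhat i 0‖ / θbar i + ‖θhat i 0‖ ^ 2 / (θbar i) ^ 2)))
    (hbar : ℝ → ℝ)
    (hbar_def : ∀ t, hbar t =
      h (xhat t) - L * M t - ∑ i, (ε / (θbar i) ^ 2) * ‖θ i - θhat i t‖ ^ 2)
    (hdiff : Differentiable ℝ hbar) :
    hbar 0 ≥ 0 ∧
      ((∀ t ≥ (0:ℝ), deriv hbar t ≥ -μ * hbar t) →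
        (∀ t ≥ (0:ℝ), ‖xhat t - x t‖ ≤ M t) →
        ∀ t ≥ (0:ℝ), h (x t) ≥ 0) := by
  obtain ⟨hε_pos, hε_le⟩ := hε
  have hpenalty_le := sum_div_sq_mul_norm_sub_sq_le (v := fun i ↦ θhat i 0) hθbar hθ hε_pos.le
  rw [Fintype.card_fin] at hpenalty_le
  have hε_mul := mul_le_of_pos_of_le_div hε_pos hε_le <|
    add_nonneg N.cast_nonneg <| sum_nonneg fun i _ ↦ by have := hθbar i; positivity
  have hbar0 : hbar 0 ≥ 0 := by
    rw [hbar_def 0]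
    linarith
  refine ⟨hbar0, fun hgrowth hobs t ht ↦ ?_⟩
  have hpenalty_nonneg : 0 ≤ ∑ i, ε / θbar i ^ 2 * ‖θ i - θhat i t‖ ^ 2 :=
    sum_nonneg fun i _ ↦ by positivity
  have hsafe : L * M t ≤ h (xhat t) := by
    linarith [hbar_def t, nonneg_of_deriv_ge_neg_mul_self hdiff hbar0 hgrowth ht]
  have hlip : h (xhat t) - h (x t) ≤ L * M t :=
    (le_abs_self _).trans <| (hLip _ _).trans <| mul_le_mul_of_nonneg_left (hobs t ht) hL.le
  linarith

theorem stmt_14 {n N : ℕ} (hN : 0 < N)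
    (h : EuclideanSpace ℝ (Fin n) → ℝ) (L : ℝ) (hL : 0 < L)
    (hLip : ∀ x y : EuclideanSpace ℝ (Fin n), |h x - h y| ≤ L * ‖x - y‖)
    (M : ℝ → ℝ) (hM : ∀ t ≥ (0:ℝ), 0 ≤ M t)
    (θbar : Fin N → ℝ) (hθbar : ∀ i, 0 < θbar i)
    (θ : Fin N → EuclideanSpace ℝ (Fin n)) (hθ : ∀ i, ‖θ i‖ ≤ θbar i)
    (θhat : Fin N → ℝ → EuclideanSpace ℝ (Fin n))
    (x xhat : ℝ → EuclideanSpace ℝ (Fin n))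
    (μ ε : ℝ) (hμ : 0 < μ)
    (hinit_pos : 0 < h (xhat 0) - L * M 0)
    (hε : 0 < ε ∧ ε ≤ (h (xhat 0) - L * M 0) /
      ((N : ℝ) + ∑ i, (2 * ‖θhat i 0‖ / θbar i + ‖θhat i 0‖ ^ 2 / (θbar i) ^ 2)))
    (hbar : ℝ → ℝ)
    (hbar_def : ∀ t, hbar t =
      h (xhat t) - L * M t - ∑ i, (ε / (θbar i) ^ 2) * ‖θ i - θhat i t‖ ^ 2)
    (hdiff : Differentiable ℝ hbar) :
    hbar 0 ≥ 0 ∧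
      ((∀ t ≥ (0:ℝ), deriv hbar t ≥ -μ * hbar t) →
        (∀ t ≥ (0:ℝ), ‖xhat t - x t‖ ≤ M t) →
        ∀ t ≥ (0:ℝ), h (x t) ≥ 0) :=
  stmt_14_general h L hL hLip M θbar hθbar θ hθ θhat x xhat μ ε hε hbar hbar_def hdiff
end
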